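/- In ℚ[[x]], the identity ((1 + (1+x)^(1/2))/2)^m = 1 + ∑_{j≥1} (m/j)·binom(m−j−1, j−1)·x^j/4^j holds for every positive integer m, where (1+x)^(1/2) is the binomial series. -/

import Mathlib

/-- The generalized binomial coefficient `z(z−1)⋯(z−n+1)/n!` for rational `z`. -/
def genBinomQ (z : ℚ) (n : ℕ) : ℚ :=
  (∏ i ∈ Finset.range n, (z - i)) / n.factorial

/-- The binomial series `(1+x)^z = ∑_j binom(z,j) x^j` in `ℚ[[x]]`. -/
noncomputable def binSeries (z : ℚ) : PowerSeries ℚ := PowerSeries.mk (genBinomQ z)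

open Finset PowerSeries

lemma genBinomQ_zero' (z : ℚ) : genBinomQ z 0 = 1 := by simp [genBinomQ]

lemma genBinomQ_succ (z : ℚ) (k : ℕ) :
    genBinomQ z (k + 1) = genBinomQ z k * (z - k) / (k + 1) := by
  unfold genBinomQ
  rw [prod_range_succ, Nat.factorial_succ, div_mul_eq_mul_div, div_div]
  push_cast
  rw [mul_comm ((k:ℚ)+1)]

lemma prod_shift (z : ℚ) (k : ℕ) :
    (∏ i ∈ range k, (z - 1 - (i:ℚ))) * z = (∏ i ∈ range k, (z - i)) * (z - k) := by
  induction k with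
  | zero => simp
  | succ n ih =>
    rw [prod_range_succ, prod_range_succ]
    push_cast
    push_cast at ih
    linear_combination (z - 1 - n) * ih

lemma genBinomQ_shift (z : ℚ) (k : ℕ) :
    z * genBinomQ (z - 1) k = (z - k) * genBinomQ z k := by
  unfold genBinomQ
  have h := prod_shift z k
  have h2 : ((k.factorial : ℚ)) ≠ 0 := by exact_mod_cast (Nat.factorial_ne_zero k)
  field_simp
  linarith [h]

lemma genBinomQ_pascal (z : ℚ) (k : ℕ) :
    genBinomQ (z + 1) (k + 1) = genBinomQ z k + genBinomQ z (k + 1) := by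
  unfold genBinomQ
  have h : (∏ i ∈ range (k+1), (z + 1 - i)) = (∏ i ∈ range k, (z - i)) * (z + 1) := by
    induction k with
    | zero => simp
    | succ n ih =>
      rw [prod_range_succ (fun i => z + 1 - (i:ℚ)) (n+1), prod_range_succ (fun i => z - (i:ℚ)) n]
      push_cast
      push_cast at ih
      linear_combination (z - n) * ih
  rw [h, prod_range_succ, Nat.factorial_succ]
  have h1 : ((k:ℚ)+1) ≠ 0 := by positivity
  have h2 : ((k.factorial : ℚ)) ≠ 0 := by exact_mod_cast (Nat.factorial_ne_zero k)
  push_cast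
  field_simp
  ring

lemma descPochhammer_smeval_rat (z : ℚ) (n : ℕ) :
    (descPochhammer ℤ n).smeval z = ∏ i ∈ range n, (z - i) := by
  induction n with
  | zero => simp [descPochhammer_zero, Polynomial.smeval_one]
  | succ n ih =>
    rw [descPochhammer_succ_right, Polynomial.smeval_mul, ih, prod_range_succ]
    congr 1
    rw [Polynomial.smeval_sub, Polynomial.smeval_X, Polynomial.smeval_natCast]
    simp

lemma genBinomQ_eq_choose (z : ℚ) (n : ℕ) : genBinomQ z n = Ring.choose z n := by
  have h := Ring.descPochhammer_eq_factorial_smul_choose (R := ℚ) z n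
  rw [descPochhammer_smeval_rat] at h
  have h2 : ((n.factorial : ℚ)) ≠ 0 := by exact_mod_cast (Nat.factorial_ne_zero n)
  rw [genBinomQ, h, nsmul_eq_mul]
  field_simp

lemma vandermonde_half (j : ℕ) :
    ∑ p ∈ antidiagonal j, genBinomQ (1/2) p.1 * genBinomQ (1/2) p.2 = genBinomQ 1 j := by
  simp only [genBinomQ_eq_choose]
  rw [show Ring.choose (1:ℚ) j = Ring.choose (1/2 + 1/2 : ℚ) j by norm_num,
    Ring.add_choose_eq j (Commute.all _ _)]

lemma genBinomQ_one_eq (j : ℕ) : genBinomQ 1 j = if j = 0 ∨ j = 1 then 1 else 0 := by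
  match j with
  | 0 => simp [genBinomQ]
  | 1 => simp [genBinomQ]
  | (k+2) =>
    simp only [genBinomQ]
    rw [Finset.prod_eq_zero (i := 1) (by simp) (by norm_num)]
    simp

lemma binSeries_half_sq : binSeries (1/2) * binSeries (1/2) = 1 + PowerSeries.X := by
  ext j
  rw [PowerSeries.coeff_mul]
  simp only [binSeries, PowerSeries.coeff_mk]
  rw [vandermonde_half, genBinomQ_one_eq]
  rcases j with _ | _ | k <;> simp [PowerSeries.coeff_X]

lemma key_sq :
    (PowerSeries.C (R := ℚ) (1/2) * (1 + binSeries (1/2)))^2 =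
      PowerSeries.C (R := ℚ) (1/2) * (1 + binSeries (1/2)) + PowerSeries.C (R := ℚ) (1/4) * PowerSeries.X := by
  have hB := binSeries_half_sq
  have h12 : PowerSeries.C (R := ℚ) (1/2) * PowerSeries.C (R := ℚ) (1/2) = PowerSeries.C (R := ℚ) (1/4) := by
    rw [← map_mul]; norm_num
  have h2 : (PowerSeries.C (R := ℚ) (1/4)) * 2 = PowerSeries.C (R := ℚ) (1/2) := by
    rw [show (2 : PowerSeries ℚ) = PowerSeries.C (R := ℚ) 2 from (map_ofNat _ 2).symm, ← map_mul]
    norm_num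
  linear_combination (PowerSeries.C (R := ℚ) (1/2) * PowerSeries.C (R := ℚ) (1/2)) * hB
    + (PowerSeries.X + 2 + 2 * binSeries (1/2)) * h12
    + (1 + binSeries (1/2)) * h2

lemma genBinomQ_succ' (z : ℚ) (k : ℕ) :
    ((k:ℚ) + 1) * genBinomQ z (k + 1) = genBinomQ z k * (z - k) := by
  rw [genBinomQ_succ]
  have h1 : ((k:ℚ)+1) ≠ 0 := by positivity
  field_simp

lemma rec_aux (m k : ℕ) :
    ((m:ℚ)+2)*((k:ℚ)+1) * genBinomQ ((m:ℚ)-k-1) (k+1)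
      = ((m:ℚ)+1)*((k:ℚ)+1) * genBinomQ ((m:ℚ)-k-2) (k+1)
        + (m:ℚ)*((k:ℚ)+2) * genBinomQ ((m:ℚ)-k-2) k := by
  have hp := genBinomQ_pascal ((m:ℚ)-k-2) k
  rw [show ((m:ℚ)-k-2) + 1 = (m:ℚ)-k-1 by ring] at hp
  have hs := genBinomQ_succ' ((m:ℚ)-k-2) k
  linear_combination (((m:ℚ)+2)*((k:ℚ)+1)) * hp + hs

lemma base1_aux (k : ℕ) :
    ((k:ℚ)+1) * 4^(k+1) * (1/2 * genBinomQ (1/2) (k+1)) = genBinomQ (-(k:ℚ) - 1) k := by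
  induction k with
  | zero => simp [genBinomQ]; norm_num
  | succ k ih =>
    have h1 := genBinomQ_succ' (1/2 : ℚ) (k+1)
    have h2 := genBinomQ_succ' (-(k:ℚ) - 2) k
    have h3 := genBinomQ_shift (-(k:ℚ) - 1) k
    rw [show (-(k:ℚ) - 1 - 1) = -(k:ℚ) - 2 by ring] at h3
    push_cast at h1 h2 h3 ⊢
    rw [show -((k:ℚ) + 1) - 1 = -(k:ℚ) - 2 by ring]
    apply mul_left_cancel₀ (a := ((k:ℚ)+1)^2) (by positivity)
    linear_combination (2*((k:ℚ)+1)^2*4^(k+1)) * h1 + (-(k:ℚ)-1) * h2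
      + (-2*((k:ℚ)+1)) * h3 + (-2*((k:ℚ)+1)*(2*(k:ℚ)+1)) * ih

/-- The right-hand side series. -/
noncomputable def Fser (m : ℕ) : PowerSeries ℚ :=
  PowerSeries.mk (fun j =>
    if j = 0 then 1
    else ((m : ℚ) / j) * genBinomQ ((m : ℚ) - j - 1) (j - 1) / 4 ^ j)

/-- The left-hand side base series. -/
noncomputable def Sser : PowerSeries ℚ := PowerSeries.C (R := ℚ) (1/2) * (1 + binSeries (1/2))

lemma F0 : Fser 0 = 1 := by
  ext j
  rcases j with _ | k <;> simp [Fser, PowerSeries.coeff_one]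

lemma F1 : Sser = Fser 1 := by
  ext j
  rcases j with _ | k
  · simp [Sser, Fser, binSeries, PowerSeries.coeff_C_mul, genBinomQ_zero']
    norm_num
  · simp only [Sser, Fser, binSeries, PowerSeries.coeff_C_mul, map_add,
      PowerSeries.coeff_one, PowerSeries.coeff_mk, Nat.succ_ne_zero, if_false]
    push_cast
    rw [show (1:ℚ) - ((k:ℚ)+1) - 1 = -(k:ℚ) - 1 by ring, ← base1_aux k]
    have hk1 : ((k:ℚ)+1) ≠ 0 := by positivity
    have h4 : (4:ℚ)^(k+1) ≠ 0 := by positivity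
    field_simp
    ring

lemma recF (m : ℕ) :
    Fser (m+2) = Fser (m+1) + PowerSeries.C (R := ℚ) (1/4) * (PowerSeries.X * Fser m) := by
  ext j
  rw [map_add, PowerSeries.coeff_C_mul]
  rcases j with _ | _ | k
  · simp [Fser, PowerSeries.coeff_zero_X_mul]
  · simp only [Fser, PowerSeries.coeff_mk, PowerSeries.coeff_succ_X_mul,
      Nat.succ_ne_zero, if_false, if_pos rfl]
    push_cast
    simp [genBinomQ_zero']
    ring
  · simp only [Fser, PowerSeries.coeff_mk, PowerSeries.coeff_succ_X_mul,
      Nat.succ_ne_zero, if_false]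
    have e1 : k + 1 + 1 - 1 = k + 1 := rfl
    have e2 : k + 1 - 1 = k := rfl
    rw [e1, e2]
    push_cast
    rw [show ((m:ℚ)+2) - ((k:ℚ)+1+1) - 1 = (m:ℚ) - k - 1 by ring,
       show ((m:ℚ)+1) - ((k:ℚ)+1+1) - 1 = (m:ℚ) - k - 2 by ring,
       show (m:ℚ) - ((k:ℚ)+1) - 1 = (m:ℚ) - k - 2 by ring]
    have h := rec_aux m k
    have hk1 : ((k:ℚ)+1) ≠ 0 := by positivity
    have hk2 : ((k:ℚ)+1+1) ≠ 0 := by positivity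
    have h4 : (4:ℚ)^(k+1) ≠ 0 := by positivity
    field_simp
    linear_combination (4 * (4:ℚ)^(k+1)) * h

lemma main_eq : ∀ m : ℕ, Sser ^ m = Fser m
  | 0 => by rw [pow_zero, F0]
  | 1 => by rw [pow_one, F1]
  | (m+2) => by
    have h1 := main_eq m
    have h2 := main_eq (m+1)
    have hs : Sser^(m+2) = Sser^m * Sser^2 := by ring
    rw [hs, show Sser^2 = Sser + PowerSeries.C (R := ℚ) (1/4) * PowerSeries.X from key_sq,
      mul_add, recF m, ← h1, ← h2]
    ring

/-- In `ℚ[[x]]`: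
`((1 + (1+x)^(1/2))/2)^m = 1 + ∑_{j≥1} (m/j) binom(m−j−1, j−1) x^j/4^j` for `m ≥ 1`. -/
theorem half_one_add_sqrt_pow (m : ℕ) (hm : 1 ≤ m) :
    (PowerSeries.C (R := ℚ) (1 / 2) * (1 + binSeries (1 / 2))) ^ m =
      PowerSeries.mk (fun j =>
        if j = 0 then 1
        else ((m : ℚ) / j) * genBinomQ ((m : ℚ) - j - 1) (j - 1) / 4 ^ j) := by
  exact main_eq m
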